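/- For any nonempty RCC5 relation R (a nonempty subset of the basic relations B₅), the weak composition satisfies: PO ∈ {PO} ⋄ R, PO ∈ R ⋄ {PO}, DR ∈ {DR} ⋄ R, and DR ∈ R ⋄ {DR}. -/
import Mathlib


/-- A *region* is a nonempty regular closed subset of the Euclidean plane `ℝ × ℝ`. -/
def Region : Type :=
  {x : Set (ℝ × ℝ) // x.Nonempty ∧ x = closure (interior x)}

namespace Region

/-- Part-of: `x P y` iff `x ⊆ y`. -/
def P (x y : Region) : Prop := x.1 ⊆ y.1

/-- Overlap: `x O y` iff some region is a common part of `x` and `y`. -/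
def O (x y : Region) : Prop := ∃ z : Region, z.1 ⊆ x.1 ∧ z.1 ⊆ y.1

/-- Connection: `x C y` iff `x ∩ y ≠ ∅`. -/
def C (x y : Region) : Prop := (x.1 ∩ y.1).Nonempty

end Region

/-- The five basic RCC5 relations. -/
inductive RCC5Basic : Type
  | DR | PO | PP | PPi | EQ
deriving DecidableEq

namespace RCC5Basic

/-- Interpretation of the basic RCC5 relations on regions. -/
def interp : RCC5Basic → Region → Region → Prop
  | DR, x, y => ¬ Region.O x y
  | PO, x, y => Region.O x y ∧ ¬ x.1 ⊆ y.1 ∧ ¬ y.1 ⊆ x.1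
  | PP, x, y => x.1 ⊆ y.1 ∧ x ≠ y
  | PPi, x, y => y.1 ⊆ x.1 ∧ x ≠ y
  | EQ, x, y => x = y

/-- Converse of a basic RCC5 relation. -/
def conv : RCC5Basic → RCC5Basic
  | DR => DR | PO => PO | PP => PPi | PPi => PP | EQ => EQ

end RCC5Basic

/-- An RCC5 relation is a union of basic relations, identified with a subset of `B₅`. -/
abbrev RCC5Rel : Type := Set RCC5Basic

namespace RCC5Rel

/-- A pair of regions is an instance of an RCC5 relation iff it is an instance of one of
its basic relations. -/
def interp (R : RCC5Rel) (x y : Region) : Prop := ∃ b ∈ R, RCC5Basic.interp b x y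

/-- Converse of an RCC5 relation. -/
def conv (R : RCC5Rel) : RCC5Rel := {b | RCC5Basic.conv b ∈ R}

/-- Weak composition: `γ ∈ R ⋄ S` iff `γ` intersects the relational composition `R ∘ S`. -/
def comp (R S : RCC5Rel) : RCC5Rel :=
  {γ | ∃ x z : Region, RCC5Basic.interp γ x z ∧
        ∃ y : Region, RCC5Rel.interp R x y ∧ RCC5Rel.interp S y z}

lemma conv_univ : RCC5Rel.conv Set.univ = Set.univ := by
  ext b; simp [RCC5Rel.conv]

end RCC5Rel

/-- A distributive subalgebra of RCC5: contains all basic relations, is closed under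
converse, weak composition and (nonempty) intersection, and weak composition distributes
over nonempty intersections. -/
def IsDistributiveSubalgebra (𝒮 : Set RCC5Rel) : Prop :=
  (∀ b : RCC5Basic, ({b} : RCC5Rel) ∈ 𝒮) ∧
  (∀ R ∈ 𝒮, RCC5Rel.conv R ∈ 𝒮) ∧
  (∀ R ∈ 𝒮, ∀ S ∈ 𝒮, RCC5Rel.comp R S ∈ 𝒮) ∧
  (∀ R ∈ 𝒮, ∀ S ∈ 𝒮, (R ∩ S).Nonempty → R ∩ S ∈ 𝒮) ∧
  (∀ R ∈ 𝒮, ∀ T₁ ∈ 𝒮, ∀ T₂ ∈ 𝒮, (T₁ ∩ T₂).Nonempty →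
    RCC5Rel.comp R (T₁ ∩ T₂) = RCC5Rel.comp R T₁ ∩ RCC5Rel.comp R T₂ ∧
    RCC5Rel.comp (T₁ ∩ T₂) R = RCC5Rel.comp T₁ R ∩ RCC5Rel.comp T₂ R)

-- === auxiliary development ===
namespace RCC5Aux
open Metric

noncomputable def pt (a : ℝ) : ℝ × ℝ := (a, 0)

lemma dist_pt (a b : ℝ) : dist (pt a) (pt b) = |a - b| := by
  simp [pt, Prod.dist_eq, Real.dist_eq]

noncomputable def B (a r : ℝ) (hr : 0 < r) : Region :=
  ⟨closedBall (pt a) r, ⟨pt a, mem_closedBall_self hr.le⟩, by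
    rw [interior_closedBall _ hr.ne', closure_ball _ hr.ne']⟩

lemma mem_B {a r b : ℝ} (hr : 0 < r) (h : |b - a| ≤ r) : pt b ∈ (B a r hr).1 := by
  simpa [B, mem_closedBall, dist_pt] using h

lemma not_mem_B {a r b : ℝ} (hr : 0 < r) (h : r < |b - a|) : pt b ∉ (B a r hr).1 := by
  simp only [B, mem_closedBall, dist_pt]
  exact not_le.2 h

lemma B_subset {a1 r1 a2 r2 : ℝ} (h1 : 0 < r1) (h2 : 0 < r2)
    (h : |a1 - a2| + r1 ≤ r2) : (B a1 r1 h1).1 ⊆ (B a2 r2 h2).1 :=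
  closedBall_subset_closedBall' (by rw [dist_pt]; linarith)

lemma O_of {a1 r1 a2 r2 : ℝ} (h1 : 0 < r1) (h2 : 0 < r2) (m s : ℝ) (hs : 0 < s)
    (ho1 : |m - a1| + s ≤ r1) (ho2 : |m - a2| + s ≤ r2) :
    Region.O (B a1 r1 h1) (B a2 r2 h2) :=
  ⟨B m s hs, B_subset hs h1 ho1, B_subset hs h2 ho2⟩

lemma not_O {a1 r1 a2 r2 : ℝ} (h1 : 0 < r1) (h2 : 0 < r2)
    (h : r1 + r2 < |a1 - a2|) : ¬ Region.O (B a1 r1 h1) (B a2 r2 h2) := by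
  rintro ⟨z, hz1, hz2⟩
  obtain ⟨p, hp⟩ := z.2.1
  have d1 : dist p (pt a1) ≤ r1 := hz1 hp
  have d2 : dist p (pt a2) ≤ r2 := hz2 hp
  have ht := dist_triangle (pt a1) p (pt a2)
  rw [dist_pt, dist_comm (pt a1) p] at ht
  linarith

lemma not_subset_B {a1 r1 a2 r2 p : ℝ} (h1 : 0 < r1) (h2 : 0 < r2)
    (hp1 : |p - a1| ≤ r1) (hp2 : r2 < |p - a2|) : ¬ (B a1 r1 h1).1 ⊆ (B a2 r2 h2).1 :=
  fun hsub => not_mem_B h2 hp2 (hsub (mem_B h1 hp1))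

lemma B_ne {a1 r1 a2 r2 p : ℝ} (h1 : 0 < r1) (h2 : 0 < r2)
    (hp1 : |p - a1| ≤ r1) (hp2 : r2 < |p - a2|) : (B a1 r1 h1) ≠ (B a2 r2 h2) := by
  intro h
  exact not_mem_B h2 hp2 (h ▸ mem_B h1 hp1)

lemma PO_of {a1 r1 a2 r2 m s p q : ℝ} (h1 : 0 < r1) (h2 : 0 < r2) (hs : 0 < s)
    (ho1 : |m - a1| + s ≤ r1) (ho2 : |m - a2| + s ≤ r2)
    (hp1 : |p - a1| ≤ r1) (hp2 : r2 < |p - a2|)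
    (hq2 : |q - a2| ≤ r2) (hq1 : r1 < |q - a1|) :
    RCC5Basic.interp .PO (B a1 r1 h1) (B a2 r2 h2) :=
  ⟨O_of h1 h2 m s hs ho1 ho2, not_subset_B h1 h2 hp1 hp2,
    not_subset_B h2 h1 hq2 hq1⟩

lemma interp_conv {b : RCC5Basic} {x y : Region}
    (h : RCC5Basic.interp b x y) : RCC5Basic.interp b.conv y x := by
  cases b with
  | DR => exact fun ⟨z, hz1, hz2⟩ => h ⟨z, hz2, hz1⟩
  | PO => exact ⟨⟨h.1.choose, h.1.choose_spec.2, h.1.choose_spec.1⟩, h.2.2, h.2.1⟩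
  | PP => exact ⟨h.1, h.2.symm⟩
  | PPi => exact ⟨h.1, h.2.symm⟩
  | EQ => exact h.symm

lemma conv_conv (b : RCC5Basic) : b.conv.conv = b := by cases b <;> rfl

/-- For each basic relation `b`, witnesses x, y, z with `PO x z`, `PO x y`, `b y z`. -/
lemma key_PO (b : RCC5Basic) :
    ∃ x y z : Region, RCC5Basic.interp .PO x z ∧ RCC5Basic.interp .PO x y ∧
      RCC5Basic.interp b y z := by
  have h4 : (0:ℝ) < 4 := by norm_num
  have h6 : (0:ℝ) < 6 := by norm_num
  have h8 : (0:ℝ) < 8 := by norm_num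
  cases b with
  | EQ =>
      exact ⟨B 12 8 h8, B 0 8 h8, B 0 8 h8,
        PO_of h8 h8 (m := 6) (s := 2) (p := 20) (q := -8) (by norm_num) (by norm_num)
          (by norm_num) (by norm_num) (by norm_num) (by norm_num) (by norm_num),
        PO_of h8 h8 (m := 6) (s := 2) (p := 20) (q := -8) (by norm_num) (by norm_num)
          (by norm_num) (by norm_num) (by norm_num) (by norm_num) (by norm_num),
        rfl⟩
  | PP =>
      exact ⟨B 6 4 h4, B 0 4 h4, B 0 8 h8,
        PO_of h4 h8 (m := 3) (s := 1) (p := 10) (q := -8) (by norm_num) (by norm_num)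
          (by norm_num) (by norm_num) (by norm_num) (by norm_num) (by norm_num),
        PO_of h4 h4 (m := 3) (s := 1) (p := 10) (q := -4) (by norm_num) (by norm_num)
          (by norm_num) (by norm_num) (by norm_num) (by norm_num) (by norm_num),
        B_subset h4 h8 (by norm_num),
        B_ne (p := -8) h8 h4 (by norm_num) (by norm_num) |>.symm⟩
  | PPi =>
      exact ⟨B 6 4 h4, B 0 8 h8, B 0 4 h4,
        PO_of h4 h4 (m := 3) (s := 1) (p := 10) (q := -4) (by norm_num) (by norm_num)
          (by norm_num) (by norm_num) (by norm_num) (by norm_num) (by norm_num),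
        PO_of h4 h8 (m := 3) (s := 1) (p := 10) (q := -8) (by norm_num) (by norm_num)
          (by norm_num) (by norm_num) (by norm_num) (by norm_num) (by norm_num),
        B_subset h4 h8 (by norm_num),
        B_ne (p := -8) h8 h4 (by norm_num) (by norm_num)⟩
  | PO =>
      exact ⟨B 6 4 h4, B 0 8 h8, B 12 8 h8,
        PO_of h4 h8 (m := 9) (s := 1) (p := 2) (q := 20) (by norm_num) (by norm_num)
          (by norm_num) (by norm_num) (by norm_num) (by norm_num) (by norm_num),
        PO_of h4 h8 (m := 3) (s := 1) (p := 10) (q := -8) (by norm_num) (by norm_num)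
          (by norm_num) (by norm_num) (by norm_num) (by norm_num) (by norm_num),
        PO_of h8 h8 (m := 6) (s := 2) (p := -8) (q := 20) (by norm_num) (by norm_num)
          (by norm_num) (by norm_num) (by norm_num) (by norm_num) (by norm_num)⟩
  | DR =>
      exact ⟨B 8 6 h6, B 0 4 h4, B 16 4 h4,
        PO_of h6 h4 (m := 13) (s := 1) (p := 2) (q := 20) (by norm_num) (by norm_num)
          (by norm_num) (by norm_num) (by norm_num) (by norm_num) (by norm_num),
        PO_of h6 h4 (m := 3) (s := 1) (p := 14) (q := -4) (by norm_num) (by norm_num)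
          (by norm_num) (by norm_num) (by norm_num) (by norm_num) (by norm_num),
        not_O h4 h4 (by norm_num)⟩

/-- For each basic relation `b`, witnesses x, y, z with `DR x z`, `DR x y`, `b y z`. -/
lemma key_DR (b : RCC5Basic) :
    ∃ x y z : Region, RCC5Basic.interp .DR x z ∧ RCC5Basic.interp .DR x y ∧
      RCC5Basic.interp b y z := by
  have h4 : (0:ℝ) < 4 := by norm_num
  have h8 : (0:ℝ) < 8 := by norm_num
  cases b with
  | EQ =>
      exact ⟨B 40 4 h4, B 0 4 h4, B 0 4 h4,
        not_O h4 h4 (by norm_num), not_O h4 h4 (by norm_num), rfl⟩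
  | PP =>
      exact ⟨B 40 4 h4, B 0 4 h4, B 0 8 h8,
        not_O h4 h8 (by norm_num), not_O h4 h4 (by norm_num),
        B_subset h4 h8 (by norm_num),
        B_ne (p := -8) h8 h4 (by norm_num) (by norm_num) |>.symm⟩
  | PPi =>
      exact ⟨B 40 4 h4, B 0 8 h8, B 0 4 h4,
        not_O h4 h4 (by norm_num), not_O h4 h8 (by norm_num),
        B_subset h4 h8 (by norm_num),
        B_ne (p := -8) h8 h4 (by norm_num) (by norm_num)⟩
  | PO =>
      exact ⟨B 40 4 h4, B 0 8 h8, B 12 8 h8,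
        not_O h4 h8 (by norm_num), not_O h4 h8 (by norm_num),
        PO_of h8 h8 (m := 6) (s := 2) (p := -8) (q := 20) (by norm_num) (by norm_num)
          (by norm_num) (by norm_num) (by norm_num) (by norm_num) (by norm_num)⟩
  | DR =>
      exact ⟨B 40 4 h4, B 0 4 h4, B 16 4 h4,
        not_O h4 h4 (by norm_num), not_O h4 h4 (by norm_num),
        not_O h4 h4 (by norm_num)⟩

end RCC5Aux

/-- For any nonempty RCC5 relation `R`: `PO ∈ {PO} ⋄ R`, `PO ∈ R ⋄ {PO}`,
`DR ∈ {DR} ⋄ R`, and `DR ∈ R ⋄ {DR}`. -/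
theorem rcc5_po_dr_weak_composition (R : RCC5Rel) (hR : R.Nonempty) :
    RCC5Basic.PO ∈ RCC5Rel.comp {RCC5Basic.PO} R ∧
    RCC5Basic.PO ∈ RCC5Rel.comp R {RCC5Basic.PO} ∧
    RCC5Basic.DR ∈ RCC5Rel.comp {RCC5Basic.DR} R ∧
    RCC5Basic.DR ∈ RCC5Rel.comp R {RCC5Basic.DR} := by
  obtain ⟨b, hb⟩ := hR
  refine ⟨?_, ?_, ?_, ?_⟩
  · obtain ⟨x, y, z, hxz, hxy, hyz⟩ := RCC5Aux.key_PO b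
    exact ⟨x, z, hxz, y, ⟨.PO, rfl, hxy⟩, ⟨b, hb, hyz⟩⟩
  · obtain ⟨x, y, z, hxz, hxy, hyz⟩ := RCC5Aux.key_PO b.conv
    exact ⟨z, x, RCC5Aux.interp_conv hxz, y,
      ⟨b, hb, RCC5Aux.conv_conv b ▸ RCC5Aux.interp_conv hyz⟩,
      ⟨.PO, rfl, RCC5Aux.interp_conv hxy⟩⟩
  · obtain ⟨x, y, z, hxz, hxy, hyz⟩ := RCC5Aux.key_DR b
    exact ⟨x, z, hxz, y, ⟨.DR, rfl, hxy⟩, ⟨b, hb, hyz⟩⟩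
  · obtain ⟨x, y, z, hxz, hxy, hyz⟩ := RCC5Aux.key_DR b.conv
    exact ⟨z, x, RCC5Aux.interp_conv hxz, y,
      ⟨b, hb, RCC5Aux.conv_conv b ▸ RCC5Aux.interp_conv hyz⟩,
      ⟨.DR, rfl, RCC5Aux.interp_conv hxy⟩⟩
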